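/- arXiv:1411.7652 — 3 statements merged into one kernel-verified Lean document; each statement's English description precedes it below -/
import Mathlib

section
/- Let N ≥ 2 and L > 0, and define the critical force F_cr = ( (1/L) · Σ_{k=1}^{N} k^{-1/2} )^2. Then the unique equilibrium configuration on [-L, 0] for constant force F > 0 satisfies: x_N > -L if F > F_cr, and x_N = -L if F ≤ F_cr. -/
/-! Force balance makes the forces `f k = δ k⁻²`, read from the free end `k = N`, an arithmetic
progression `f N, f N + F, f N + 2F, …`, so the chain has length `∑ (f N + j F)^(-1/2)`. This is
decreasing in the end force `f N`, and for `f N = F` it equals `S / √F` with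
`S = ∑_{k=1}^N k^(-1/2)`, which is below `L` exactly when `F > F_cr = (S / L)²`. A chain pressed
against the wall has `f N ≥ F`, hence length at most `S / √F`; a free chain has `f N = F`, hence
length exactly `S / √F`. -/

/-- An equilibrium (fixed-point) configuration of `N+1` charges
`-L ≤ x N < ... < x 1 < x 0 = 0` on `[-L, 0]` under constant external force `F`:
with gaps `δ k = x (k-1) - x k` and `f k = (δ k)⁻²`, the force balance
`f (k+1) + F = f k` holds for `k = 1, ..., N-1`, and at the left end either
`x N = -L` with `f N ≥ F`, or `x N > -L` with `f N = F`. Such a configuration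
exists and is unique. -/
def IsEquilibConst (N : ℕ) (L F : ℝ) (x : ℕ → ℝ) : Prop :=
  x 0 = 0 ∧ (∀ k < N, x (k + 1) < x k) ∧ -L ≤ x N ∧
  (∀ k, 1 ≤ k → k < N →
    ((x k - x (k + 1)) ^ 2)⁻¹ + F = ((x (k - 1) - x k) ^ 2)⁻¹) ∧
  ((x N = -L ∧ F ≤ ((x (N - 1) - x N) ^ 2)⁻¹) ∨
   (-L < x N ∧ ((x (N - 1) - x N) ^ 2)⁻¹ = F))

open Finset

/-- Length of `N` gaps with forces `δ⁻² = c, c + F, …, c + (N - 1) F`, counted from the free end. -/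
noncomputable def chainLength (N : ℕ) (F c : ℝ) : ℝ :=
  ∑ j ∈ range N, (√(c + j * F))⁻¹

lemma chainLength_anti {N : ℕ} {F c c' : ℝ} (hF : 0 ≤ F) (hc : 0 < c) (hcc' : c ≤ c') :
    chainLength N F c' ≤ chainLength N F c := by
  refine sum_le_sum fun j _ => inv_anti₀ (Real.sqrt_pos.mpr (by positivity)) ?_
  exact Real.sqrt_le_sqrt (by linarith)

lemma chainLength_self (N : ℕ) (F : ℝ) :
    chainLength N F F = (∑ k ∈ Icc 1 N, (√(k : ℝ))⁻¹) / √F := by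
  have hsplit (j : ℕ) : (√(F + j * F))⁻¹ = (√((j + 1 : ℕ) : ℝ))⁻¹ / √F := by
    rw [show F + j * F = ((j + 1 : ℕ) : ℝ) * F by push_cast; ring,
      Real.sqrt_mul (Nat.cast_nonneg _), mul_inv, div_eq_mul_inv]
  rw [chainLength, sum_congr rfl fun j _ => hsplit j, ← sum_div, range_eq_Ico,
    sum_Ico_add' (fun k : ℕ => (√(k : ℝ))⁻¹), zero_add, Ico_add_one_right_eq_Icc]

namespace IsEquilibConst

variable {N : ℕ} {L F : ℝ} {x : ℕ → ℝ}

lemma gap_from_end_pos (hx : IsEquilibConst N L F x) {j : ℕ} (hj : j < N) :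
    0 < x (N - 1 - j) - x (N - j) := by
  have h := hx.2.1 (N - 1 - j) (by omega)
  rw [show N - 1 - j + 1 = N - j by omega] at h
  linarith

lemma inv_sq_gap_from_end (hx : IsEquilibConst N L F x) {j : ℕ} (hj : j < N) :
    ((x (N - 1 - j) - x (N - j)) ^ 2)⁻¹ = ((x (N - 1) - x N) ^ 2)⁻¹ + j * F := by
  induction j with
  | zero => simp
  | succ j ih =>
    have h := hx.2.2.2.1 (N - 1 - j) (by omega) (by omega)
    rw [show N - 1 - j - 1 = N - 1 - (j + 1) by omega, show N - 1 - j + 1 = N - j by omega,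
      ih (by omega), show N - 1 - j = N - (j + 1) by omega] at h
    rw [← h]
    push_cast
    ring

lemma neg_eq_chainLength (hx : IsEquilibConst N L F x) :
    -x N = chainLength N F ((x (N - 1) - x N) ^ 2)⁻¹ := by
  have hgap (j : ℕ) (hj : j < N) : x (N - 1 - j) - x (N - 1 - j + 1)
      = (√(((x (N - 1) - x N) ^ 2)⁻¹ + j * F))⁻¹ := by
    rw [show N - 1 - j + 1 = N - j by omega, ← hx.inv_sq_gap_from_end hj, Real.sqrt_inv,
      Real.sqrt_sq (hx.gap_from_end_pos hj).le, inv_inv]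
  calc -x N = ∑ i ∈ range N, (x i - x (i + 1)) := by rw [sum_range_sub', hx.1, zero_sub]
    _ = ∑ j ∈ range N, (x (N - 1 - j) - x (N - 1 - j + 1)) :=
      (sum_range_reflect (fun i => x i - x (i + 1)) N).symm
    _ = _ := sum_congr rfl fun j hj => hgap j (mem_range.mp hj)

end IsEquilibConst

lemma div_sqrt_lt_iff_sq_div_lt {S L F : ℝ} (hS : 0 ≤ S) (hL : 0 < L) (hF : 0 < F) :
    S / √F < L ↔ (S / L) ^ 2 < F := by
  rw [← Real.lt_sqrt (by positivity), div_lt_iff₀ (Real.sqrt_pos.mpr hF),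
    div_lt_iff₀ hL, mul_comm]

theorem critical_force_dichotomy_general
    (N : ℕ) (L F : ℝ) (hL : 0 < L) (hF : 0 < F)
    (Fcr : ℝ)
    (hFcr : Fcr = ((1 / L) * ∑ k ∈ Finset.Icc 1 N, (Real.sqrt (k : ℝ))⁻¹) ^ 2)
    (x : ℕ → ℝ) (hx : IsEquilibConst N L F x) :
    (Fcr < F → -L < x N) ∧ (F ≤ Fcr → x N = -L) := by
  set S := ∑ k ∈ Icc 1 N, (√(k : ℝ))⁻¹
  have hcrit : S / √F < L ↔ Fcr < F := by
    rw [hFcr, one_div_mul_eq_div]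
    exact div_sqrt_lt_iff_sq_div_lt (by positivity) hL hF
  have hlen := hx.neg_eq_chainLength
  rw [← chainLength_self] at hcrit
  refine ⟨fun hsuper => ?_, fun hsub => ?_⟩
  · obtain ⟨hwall, hc⟩ | ⟨hfree, -⟩ := hx.2.2.2.2
    · have hshorter := chainLength_anti (N := N) hF.le hF hc
      linarith [hcrit.mpr hsuper]
    · exact hfree
  · obtain ⟨hwall, -⟩ | ⟨hfree, hc⟩ := hx.2.2.2.2
    · exact hwall
    · rw [hc] at hlen
      linarith [mt hcrit.mp hsub.not_gt]

/-- With critical force `F_cr = ((1/L) ∑_{k=1}^N k^(-1/2))²`,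
the equilibrium configuration satisfies `x N > -L` for `F > F_cr` and
`x N = -L` for `F ≤ F_cr`. -/
theorem critical_force_dichotomy
    (N : ℕ) (hN : 2 ≤ N) (L F : ℝ) (hL : 0 < L) (hF : 0 < F)
    (Fcr : ℝ)
    (hFcr : Fcr = ((1 / L) * ∑ k ∈ Finset.Icc 1 N, (Real.sqrt (k : ℝ))⁻¹) ^ 2)
    (x : ℕ → ℝ) (hx : IsEquilibConst N L F x) :
    (Fcr < F → -L < x N) ∧ (F ≤ Fcr → x N = -L) :=
  critical_force_dichotomy_general N L F hL hF Fcr hFcr x hx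
end

section
/- Fix L > 0 and a sequence of constant forces F(N) > 0 with F(N)/N → 0 as N → ∞. For each N ≥ 2 let δ_1^{(N)}, ..., δ_N^{(N)} be the gaps of the unique equilibrium configuration on [-L, 0] for force F(N). Then N · max_{1 ≤ k ≤ N} | δ_k^{(N)} - L/N | → 0 as N → ∞; that is, the limiting particle density is strictly uniform on [-L, 0]. -/
/-!
Write `δ k` for the gaps. The force balance telescopes to `δ k⁻² = δ N⁻² + (N - k) F`, so the gaps
increase with `k` and `N δ 1 ≤ ∑ δ k ≤ L`. The last charge cannot float free: then `δ 1⁻² = N F`,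
and `N δ 1 ≤ L` would force `N ≤ L² F`. So the gaps sum to exactly `L`, whence
`δ 1 ≤ L / N ≤ δ N` and every `|δ k - L / N|` is at most the spread `δ N - δ 1`. Since
`δ 1⁻² - δ N⁻² ≤ N F`, the spread is at most `N F δ 1² δ N ≤ (L² F / N) δ N`, which is
`O(L³ F / N²)` once `L² F ≤ N / 2`.
-/

open Finset Filter Topology

lemma sub_le_inv_sq_sub_inv_sq_mul {p q : ℝ} (hp : 0 < p) (hpq : p ≤ q) :
    q - p ≤ ((p ^ 2)⁻¹ - (q ^ 2)⁻¹) * p ^ 2 * q := by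
  have hq : 0 < q := hp.trans_le hpq
  have key : ((p ^ 2)⁻¹ - (q ^ 2)⁻¹) * p ^ 2 * q = (q - p) * (q + p) / q := by
    field_simp
    ring
  rw [key, le_div_iff₀ hq]
  nlinarith

def gap (x : ℕ → ℝ) (k : ℕ) : ℝ := x (k - 1) - x k

lemma sum_range_gap_succ (x : ℕ → ℝ) (N : ℕ) : ∑ k ∈ range N, gap x (k + 1) = x 0 - x N :=
  sum_range_sub' x N

namespace IsEquilibConst

variable {N : ℕ} {L F : ℝ} {x : ℕ → ℝ}

lemma gap_pos (h : IsEquilibConst N L F x) {k : ℕ} (hk : 1 ≤ k) (hkN : k ≤ N) : 0 < gap x k := by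
  have hlt := h.2.1 (k - 1) (by omega)
  rw [Nat.sub_add_cancel hk] at hlt
  exact sub_pos.mpr hlt

lemma inv_sq_gap (h : IsEquilibConst N L F x) {k : ℕ} (hk : 1 ≤ k) (hkN : k ≤ N) :
    (gap x k ^ 2)⁻¹ = (gap x N ^ 2)⁻¹ + (N - k : ℕ) * F := by
  induction hj : N - k generalizing k with
  | zero =>
    obtain rfl : k = N := by omega
    simp
  | succ j ih =>
    have balance : (gap x (k + 1) ^ 2)⁻¹ + F = (gap x k ^ 2)⁻¹ := h.2.2.2.1 k hk (by omega)
    rw [← balance, ih (by omega) (by omega) (by omega)]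
    push_cast
    ring

lemma gap_mono (h : IsEquilibConst N L F x) (hF : 0 ≤ F) {j k : ℕ} (hj : 1 ≤ j) (hjk : j ≤ k)
    (hkN : k ≤ N) : gap x j ≤ gap x k := by
  have hj0 := h.gap_pos hj (hjk.trans hkN)
  have hk0 := h.gap_pos (hj.trans hjk) hkN
  have hsq : (gap x k ^ 2)⁻¹ ≤ (gap x j ^ 2)⁻¹ := by
    rw [h.inv_sq_gap hj (hjk.trans hkN), h.inv_sq_gap (hj.trans hjk) hkN]
    gcongr
  rw [inv_le_inv₀ (by positivity) (by positivity)] at hsq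
  exact (pow_le_pow_iff_left₀ hj0.le hk0.le two_ne_zero).mp hsq

lemma sum_range_gap_succ_le (h : IsEquilibConst N L F x) : ∑ k ∈ range N, gap x (k + 1) ≤ L := by
  rw [sum_range_gap_succ, h.1]
  linarith [h.2.2.1]

lemma mul_gap_one_le (h : IsEquilibConst N L F x) (hF : 0 ≤ F) : N * gap x 1 ≤ L := by
  refine le_trans ?_ h.sum_range_gap_succ_le
  simpa using card_nsmul_le_sum (range N) (fun k => gap x (k + 1)) (gap x 1)
    fun k hk => h.gap_mono hF le_rfl (by omega) (by simp at hk; omega)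

lemma last_eq_neg (h : IsEquilibConst N L F x) (hF : 0 ≤ F) (hN : 0 < N) (hsmall : L ^ 2 * F < N) :
    x N = -L := by
  rcases h.2.2.2.2 with ⟨hpinned, -⟩ | ⟨-, hfree⟩
  · exact hpinned
  have hδ := h.gap_pos le_rfl hN
  have hNδ := h.mul_gap_one_le hF
  have hinv : (gap x 1 ^ 2)⁻¹ = N * F := by
    rw [h.inv_sq_gap le_rfl hN, show (gap x N ^ 2)⁻¹ = F from hfree]
    push_cast [hN]
    ring
  have hone : gap x 1 ^ 2 * (N * F) = 1 := by rw [← hinv]; field_simp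
  have : (N : ℝ) ≤ L ^ 2 * F := by
    have hsq : (N * gap x 1) ^ 2 ≤ L ^ 2 := pow_le_pow_left₀ (by positivity) hNδ 2
    nlinarith
  linarith

lemma le_mul_gap_last (h : IsEquilibConst N L F x) (hF : 0 ≤ F) (hN : 0 < N)
    (hsmall : L ^ 2 * F < N) : L ≤ N * gap x N := by
  have hsum : ∑ k ∈ range N, gap x (k + 1) = L := by
    rw [sum_range_gap_succ, h.1, h.last_eq_neg hF hN hsmall]
    ring
  rw [← hsum]
  simpa using sum_le_card_nsmul (range N) (fun k => gap x (k + 1)) (gap x N)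
    fun k hk => h.gap_mono hF (by omega) (by simp at hk; omega) le_rfl

lemma gap_last_sub_gap_one_le (h : IsEquilibConst N L F x) (hF : 0 ≤ F) (hN : 0 < N)
    (hsmall : 2 * L ^ 2 * F ≤ N) : gap x N - gap x 1 ≤ 2 * L ^ 3 * F / N ^ 2 := by
  have hNpos : (0 : ℝ) < N := by exact_mod_cast hN
  set p := gap x 1
  set q := gap x N
  have hp : 0 < p := h.gap_pos le_rfl hN
  have hpq : p ≤ q := h.gap_mono hF le_rfl hN le_rfl
  have hq0 : 0 < q := hp.trans_le hpq
  have hpL : p ≤ L / N := by rw [le_div_iff₀ hNpos, mul_comm]; exact h.mul_gap_one_le hF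
  have hD : (p ^ 2)⁻¹ - (q ^ 2)⁻¹ ≤ N * F := by
    rw [h.inv_sq_gap le_rfl hN, add_sub_cancel_left]
    gcongr
    exact_mod_cast Nat.sub_le N 1
  have hspread : q - p ≤ L ^ 2 * F / N * q :=
    calc q - p ≤ ((p ^ 2)⁻¹ - (q ^ 2)⁻¹) * p ^ 2 * q := sub_le_inv_sq_sub_inv_sq_mul hp hpq
      _ ≤ (N * F) * (L / N) ^ 2 * q := by gcongr
      _ = L ^ 2 * F / N * q := by field_simp
  have hr : L ^ 2 * F / N ≤ 1 / 2 := by rw [div_le_iff₀ hNpos]; linarith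
  have hq : q ≤ 2 * (L / N) := by nlinarith
  calc q - p ≤ L ^ 2 * F / N * q := hspread
    _ ≤ L ^ 2 * F / N * (2 * (L / N)) := by gcongr
    _ = 2 * L ^ 3 * F / N ^ 2 := by ring

theorem mul_abs_gap_sub_le (h : IsEquilibConst N L F x) (hF : 0 ≤ F) (hN : 0 < N)
    (hsmall : 2 * L ^ 2 * F ≤ N) {k : ℕ} (hk : 1 ≤ k) (hkN : k ≤ N) :
    N * |gap x k - L / N| ≤ 2 * L ^ 3 * (F / N) := by
  have hNpos : (0 : ℝ) < N := by exact_mod_cast hN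
  have hsmall' : L ^ 2 * F < N := by linarith [sq_nonneg L]
  have hlo : gap x 1 ≤ gap x k := h.gap_mono hF le_rfl hk hkN
  have hhi : gap x k ≤ gap x N := h.gap_mono hF hk hkN le_rfl
  have hmean_lo : gap x 1 ≤ L / N := by
    rw [le_div_iff₀ hNpos, mul_comm]; exact h.mul_gap_one_le hF
  have hmean_hi : L / N ≤ gap x N := by
    rw [div_le_iff₀ hNpos, mul_comm]; exact h.le_mul_gap_last hF hN hsmall'
  have habs : |gap x k - L / N| ≤ gap x N - gap x 1 :=
    abs_sub_le_of_le_of_le hlo hhi hmean_lo hmean_hi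
  calc N * |gap x k - L / N| ≤ N * (2 * L ^ 3 * F / N ^ 2) := by
        gcongr
        exact habs.trans (h.gap_last_sub_gap_one_le hF hN hsmall)
    _ = 2 * L ^ 3 * (F / N) := by field_simp

end IsEquilibConst

theorem uniform_density_subcritical_general
    (L : ℝ) (F : ℕ → ℝ) (hFpos : ∀ N, 0 < F N)
    (hFo : Filter.Tendsto (fun N : ℕ => F N / (N : ℝ)) Filter.atTop (nhds 0))
    (x : ℕ → ℕ → ℝ) (hx : ∀ N, 2 ≤ N → IsEquilibConst N L (F N) (x N)) :
    ∀ ε > (0 : ℝ), ∃ N₀ : ℕ, ∀ N, N₀ ≤ N → 2 ≤ N → ∀ k, 1 ≤ k → k ≤ N →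
      (N : ℝ) * |(x N (k - 1) - x N k) - L / N| < ε := by
  intro ε hε
  have hlim (c : ℝ) : Tendsto (fun N : ℕ => c * (F N / N)) atTop (𝓝 0) := by
    simpa using hFo.const_mul c
  have hspread := (hlim (2 * L ^ 3)).eventually_lt_const hε
  have hsmall := (hlim (2 * L ^ 2)).eventually_lt_const one_pos
  obtain ⟨N₀, hN₀⟩ := eventually_atTop.mp (hspread.and hsmall)
  refine ⟨N₀, fun N hN hN2 k hk hkN => ?_⟩
  obtain ⟨hε', hsmall'⟩ := hN₀ N hN
  have hNpos : (0 : ℝ) < N := by positivity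
  have hsmallN : 2 * L ^ 2 * F N ≤ N := by
    rw [mul_div_assoc', div_lt_one hNpos] at hsmall'
    exact hsmall'.le
  exact ((hx N hN2).mul_abs_gap_sub_le (hFpos N).le (by omega) hsmallN hk hkN).trans_lt hε'

/-- If the constant forces satisfy `F N / N → 0`, then the
gaps of the equilibrium configurations are asymptotically uniform:
`N · max_{1 ≤ k ≤ N} |δ k - L/N| → 0` as `N → ∞`. -/
theorem uniform_density_subcritical
    (L : ℝ) (hL : 0 < L) (F : ℕ → ℝ) (hFpos : ∀ N, 0 < F N)
    (hFo : Filter.Tendsto (fun N : ℕ => F N / (N : ℝ)) Filter.atTop (nhds 0))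
    (x : ℕ → ℕ → ℝ) (hx : ∀ N, 2 ≤ N → IsEquilibConst N L (F N) (x N)) :
    ∀ ε > (0 : ℝ), ∃ N₀ : ℕ, ∀ N, N₀ ≤ N → 2 ≤ N → ∀ k, 1 ≤ k → k ≤ N →
      (N : ℝ) * |(x N (k - 1) - x N k) - L / N| < ε :=
  uniform_density_subcritical_general L F hFpos hFo x hx
end

section
/- Fix L > 0 and c > 4/L^2, and for each N ≥ 2 consider the unique equilibrium configuration on [-L, 0] for constant force F = cN. Then for all sufficiently large N the leftmost particle satisfies -L < x_N^{(N)}, and x_N^{(N)} → -2/√c as N → ∞. -/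
open Finset Filter Topology

noncomputable def invSqrtSum (N : ℕ) : ℝ := ∑ j ∈ range N, (√(j + 1))⁻¹

lemma inv_sqrt_add_one_le {x : ℝ} (hx : 0 ≤ x) : (√(x + 1))⁻¹ ≤ 2 * (√(x + 1) - √x) := by
  have hpos : 0 < √(x + 1) := Real.sqrt_pos.2 (by linarith)
  rw [← one_div, div_le_iff₀ hpos]
  nlinarith [sq_nonneg (√(x + 1) - √x), Real.sq_sqrt hx,
    Real.sq_sqrt (by linarith : 0 ≤ x + 1)]

lemma two_mul_sqrt_add_two_sub_le {x : ℝ} (hx : 0 ≤ x) :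
    2 * (√(x + 2) - √(x + 1)) ≤ (√(x + 1))⁻¹ := by
  have hpos : 0 < √(x + 1) := Real.sqrt_pos.2 (by linarith)
  rw [← one_div, le_div_iff₀ hpos]
  nlinarith [sq_nonneg (√(x + 2) - √(x + 1)), Real.sq_sqrt (by linarith : 0 ≤ x + 1),
    Real.sq_sqrt (by linarith : 0 ≤ x + 2)]

lemma invSqrtSum_le (N : ℕ) : invSqrtSum N ≤ 2 * √N := by
  calc invSqrtSum N ≤ ∑ j ∈ range N, (2 * √((j + 1 : ℕ) : ℝ) - 2 * √(j : ℝ)) := by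
        refine sum_le_sum fun j _ => ?_
        push_cast
        linarith [inv_sqrt_add_one_le (Nat.cast_nonneg' j : (0:ℝ) ≤ j)]
    _ = 2 * √N := by rw [sum_range_sub (fun j : ℕ => 2 * √(j : ℝ))]; simp

lemma two_mul_sqrt_add_one_sub_two_le_invSqrtSum (N : ℕ) :
    2 * √(N + 1) - 2 ≤ invSqrtSum N := by
  calc 2 * √(N + 1) - 2
        = ∑ j ∈ range N, (2 * √(((j + 1 : ℕ) : ℝ) + 1) - 2 * √((j : ℝ) + 1)) := by
        rw [sum_range_sub (fun j : ℕ => 2 * √((j : ℝ) + 1))]; simp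
    _ ≤ invSqrtSum N := by
        refine sum_le_sum fun j _ => ?_
        have := two_mul_sqrt_add_two_sub_le (Nat.cast_nonneg' j : (0:ℝ) ≤ j)
        push_cast
        ring_nf at this ⊢
        linarith

lemma tendsto_invSqrtSum_div_sqrt :
    Tendsto (fun N : ℕ => invSqrtSum N / √N) atTop (𝓝 2) := by
  have hinv : Tendsto (fun N : ℕ => (√N)⁻¹) atTop (𝓝 0) :=
    tendsto_inv_atTop_zero.comp (Real.tendsto_sqrt_atTop.comp tendsto_natCast_atTop_atTop)
  have hlower : Tendsto (fun N : ℕ => 2 - 2 * (√N)⁻¹) atTop (𝓝 2) := by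
    simpa using (hinv.const_mul 2).const_sub 2
  refine tendsto_of_tendsto_of_tendsto_of_le_of_le' hlower tendsto_const_nhds ?_ ?_ <;>
    filter_upwards [eventually_ge_atTop 1] with N hN <;>
    have hsqrt : 0 < √(N : ℝ) := Real.sqrt_pos.2 (by exact_mod_cast hN)
  · have hmono : √(N : ℝ) ≤ √(N + 1) := Real.sqrt_le_sqrt (by linarith)
    rw [le_div_iff₀ hsqrt, sub_mul, mul_assoc, inv_mul_cancel₀ hsqrt.ne']
    linarith [two_mul_sqrt_add_one_sub_two_le_invSqrtSum N]
  · rw [div_le_iff₀ hsqrt]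
    exact invSqrtSum_le N

/-- The span of an equilibrium with free left end: its gaps are `(j F)^{-1/2}`, `j = 1, …, N`. -/
noncomputable def freeSpan (N : ℕ) (F : ℝ) : ℝ := (√F)⁻¹ * invSqrtSum N

lemma sum_inv_sqrt_reflect_eq_freeSpan (N : ℕ) (F : ℝ) :
    ∑ k ∈ range N, (√(((N - 1 - k : ℕ) + 1) * F))⁻¹ = freeSpan N F := by
  rw [sum_range_reflect (fun j : ℕ => (√((j + 1) * F))⁻¹) N, freeSpan, invSqrtSum, mul_sum]
  refine sum_congr rfl fun j _ => ?_
  rw [Real.sqrt_mul (by positivity), mul_inv, mul_comm]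

namespace IsEquilibConst

variable {N : ℕ} {L F : ℝ} {x : ℕ → ℝ}

lemma inv_sq_gap_eq (h : IsEquilibConst N L F x) {k : ℕ} (hk : k < N) :
    ((x k - x (k + 1)) ^ 2)⁻¹ = ((x (N - 1) - x N) ^ 2)⁻¹ + (N - 1 - k : ℕ) * F := by
  suffices ∀ m j, j + m + 1 = N →
      ((x j - x (j + 1)) ^ 2)⁻¹ = ((x (N - 1) - x N) ^ 2)⁻¹ + m * F by
    exact this _ k (by omega)
  intro m
  induction m with
  | zero =>
    intro j hj
    obtain rfl : j = N - 1 := by omega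
    simp [Nat.sub_add_cancel (by omega : 1 ≤ N)]
  | succ m ih =>
    intro j hj
    have hrec := h.2.2.2.1 (j + 1) (by omega) (by omega)
    rw [Nat.add_sub_cancel, ih (j + 1) (by omega)] at hrec
    rw [← hrec]
    push_cast
    ring

lemma neg_eq_sum_gaps (h : IsEquilibConst N L F x) :
    -x N = ∑ k ∈ range N, (x k - x (k + 1)) := by
  rw [sum_range_sub', h.1, zero_sub]

lemma gap_le (hF : 0 < F) (h : IsEquilibConst N L F x)
    (hlast : F ≤ ((x (N - 1) - x N) ^ 2)⁻¹) {k : ℕ} (hk : k < N) :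
    x k - x (k + 1) ≤ (√(((N - 1 - k : ℕ) + 1) * F))⁻¹ := by
  have hgap : 0 < x k - x (k + 1) := sub_pos.2 (h.2.1 k hk)
  have hA : 0 < ((N - 1 - k : ℕ) + 1) * F := by positivity
  have hle : ((N - 1 - k : ℕ) + 1) * F ≤ ((x k - x (k + 1)) ^ 2)⁻¹ := by
    rw [h.inv_sq_gap_eq hk]
    linarith
  rw [← Real.sqrt_inv, Real.le_sqrt' hgap]
  exact (le_inv_comm₀ hA (by positivity)).1 hle

lemma gap_eq (h : IsEquilibConst N L F x)
    (hlast : ((x (N - 1) - x N) ^ 2)⁻¹ = F) {k : ℕ} (hk : k < N) :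
    x k - x (k + 1) = (√(((N - 1 - k : ℕ) + 1) * F))⁻¹ := by
  have hgap : 0 < x k - x (k + 1) := sub_pos.2 (h.2.1 k hk)
  have heq : ((x k - x (k + 1)) ^ 2)⁻¹ = ((N - 1 - k : ℕ) + 1) * F := by
    rw [h.inv_sq_gap_eq hk, hlast]
    ring
  rw [← heq, Real.sqrt_inv, inv_inv, Real.sqrt_sq hgap.le]

lemma neg_le_freeSpan (hF : 0 < F) (h : IsEquilibConst N L F x)
    (hlast : F ≤ ((x (N - 1) - x N) ^ 2)⁻¹) : -x N ≤ freeSpan N F := by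
  rw [h.neg_eq_sum_gaps, ← sum_inv_sqrt_reflect_eq_freeSpan]
  exact sum_le_sum fun k hk => h.gap_le hF hlast (mem_range.1 hk)

lemma eq_neg_freeSpan (h : IsEquilibConst N L F x)
    (hlast : ((x (N - 1) - x N) ^ 2)⁻¹ = F) : x N = -freeSpan N F := by
  rw [← sum_inv_sqrt_reflect_eq_freeSpan,
    ← sum_congr rfl fun k hk => h.gap_eq hlast (mem_range.1 hk), ← h.neg_eq_sum_gaps, neg_neg]

lemma free_of_freeSpan_lt (hF : 0 < F) (h : IsEquilibConst N L F x)
    (hspan : freeSpan N F < L) : -L < x N ∧ ((x (N - 1) - x N) ^ 2)⁻¹ = F := by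
  rcases h.2.2.2.2 with ⟨hxN, hlast⟩ | hfree
  · linarith [h.neg_le_freeSpan hF hlast]
  · exact hfree

end IsEquilibConst

lemma freeSpan_mul_natCast {c : ℝ} (hc : 0 ≤ c) (N : ℕ) :
    freeSpan N (c * N) = (√c)⁻¹ * (invSqrtSum N / √N) := by
  rw [freeSpan, Real.sqrt_mul hc, mul_inv, div_eq_mul_inv]
  ring

lemma freeSpan_mul_natCast_le {c : ℝ} (hc : 0 ≤ c) (N : ℕ) :
    freeSpan N (c * N) ≤ 2 / √c := by
  rw [freeSpan_mul_natCast hc, div_eq_inv_mul 2]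
  refine mul_le_mul_of_nonneg_left ?_ (inv_nonneg.2 (Real.sqrt_nonneg c))
  rcases N.eq_zero_or_pos with rfl | hN
  · simp [invSqrtSum]
  · rw [div_le_iff₀ (Real.sqrt_pos.2 (by exact_mod_cast hN))]
    exact invSqrtSum_le N

lemma tendsto_freeSpan_mul_natCast {c : ℝ} (hc : 0 ≤ c) :
    Tendsto (fun N : ℕ => freeSpan N (c * N)) atTop (𝓝 (2 / √c)) := by
  have h := tendsto_invSqrtSum_div_sqrt.const_mul (√c)⁻¹
  rw [inv_mul_eq_div] at h
  simpa only [freeSpan_mul_natCast hc] using h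

/-- For `c > 4/L²` and force `F = c N`, eventually the
leftmost particle of the equilibrium configuration detaches from `-L`, and
`x N N → -2/√c` as `N → ∞`. -/
theorem leftmost_particle_supercritical_linear
    (L c : ℝ) (hL : 0 < L) (hc : 4 / L ^ 2 < c)
    (x : ℕ → ℕ → ℝ)
    (hx : ∀ N, 2 ≤ N → IsEquilibConst N L (c * (N : ℝ)) (x N)) :
    (∀ᶠ N in Filter.atTop, -L < x N N) ∧
    Filter.Tendsto (fun N => x N N) Filter.atTop (nhds (-2 / Real.sqrt c)) := by
  have hc0 : 0 < c := (by positivity : 0 < 4 / L ^ 2).trans hc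
  have hspan : 2 / √c < L := by
    rw [div_lt_comm₀ (Real.sqrt_pos.2 hc0) hL, Real.lt_sqrt (by positivity), div_pow]
    norm_num
    exact hc
  have hfree : ∀ N, 2 ≤ N → -L < x N N ∧ x N N = -freeSpan N (c * N) := by
    intro N hN
    have hF : 0 < c * N := mul_pos hc0 (by exact_mod_cast (by omega : 0 < N))
    obtain ⟨hleft, hlast⟩ := (hx N hN).free_of_freeSpan_lt hF
      ((freeSpan_mul_natCast_le hc0.le N).trans_lt hspan)
    exact ⟨hleft, (hx N hN).eq_neg_freeSpan hlast⟩
  refine ⟨eventually_atTop.2 ⟨2, fun N hN => (hfree N hN).1⟩, ?_⟩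
  rw [neg_div]
  exact (tendsto_freeSpan_mul_natCast hc0.le).neg.congr'
    (eventually_atTop.2 ⟨2, fun N hN => (hfree N hN).2.symm⟩)
end
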